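/- arXiv:1111.0771 — 2 statements merged into one kernel-verified Lean document; each statement's English description precedes it below -/
import Mathlib

section
/- Suppose G is a group with finite symmetric generating set X whose set of geodesic words is k-locally excluding for some k > 0. If w is a geodesic word over X, x ∈ X, and v is the suffix of w of length k-1 (or all of w if l(w) < k-1), then wx is geodesic if and only if vx is geodesic. -/
/-- The minimal length of a word over `X` representing `g` (the geodesic length `l_G`). -/
noncomputable def lG {G : Type*} [Group G] (X : Set G) (g : G) : ℕ :=
  sInf {n | ∃ w : List G, (∀ x ∈ w, x ∈ X) ∧ w.prod = g ∧ w.length = n}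

/-- `w` is a geodesic word over `X`. -/
def Geodesic {G : Type*} [Group G] (X : Set G) (w : List G) : Prop :=
  (∀ x ∈ w, x ∈ X) ∧ w.length = lG X w.prod

/-- `w` is a `k`-local geodesic over `X`: every subword (contiguous factor) of length
at most `k` is geodesic. -/
def LocalGeodesic {G : Type*} [Group G] (X : Set G) (k : ℕ) (w : List G) : Prop :=
  (∀ x ∈ w, x ∈ X) ∧ ∀ u : List G, u <:+: w → u.length ≤ k → Geodesic X u

/-- A language `L` of words over `X` is `k`-locally excluding: membership (among words
over `X`) is equivalent to avoiding a fixed finite set of forbidden subwords of length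
at most `k`. -/
def LocallyExcluding {G : Type*} [Group G] (X : Set G) (k : ℕ) (L : Set (List G)) : Prop :=
  ∃ F : Set (List G), F.Finite ∧ (∀ f ∈ F, f.length ≤ k) ∧
    ∀ w : List G, (∀ x ∈ w, x ∈ X) → (w ∈ L ↔ ∀ f ∈ F, ¬ f <:+: w)

/-- One step of rewriting with the set of rules `R` (replace a subword `p.1` by `p.2`). -/
def Rewrite {G : Type*} (R : Set (List G × List G)) (w w' : List G) : Prop :=
  ∃ p ∈ R, ∃ l r : List G, w = l ++ p.1 ++ r ∧ w' = l ++ p.2 ++ r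

/-! A forbidden factor of `w x` that is not a factor of the geodesic `w` is a suffix of `w x`;
having length at most `k`, it is already a suffix of `v x`. Conversely, every factor of `v x`
is a factor of `w x`. -/

section LocallyExcluding

variable {G : Type*} [Group G] {X : Set G} {k : ℕ} {L : Set (List G)}

theorem LocallyExcluding.mem_of_infix (hL : LocallyExcluding X k L) {u w : List G}
    (huw : u <:+: w) (hw : w ∈ L) (hwX : ∀ y ∈ w, y ∈ X) : u ∈ L := by
  obtain ⟨F, -, -, hF⟩ := hL
  exact (hF u fun y hy => hwX y (huw.subset hy)).mpr fun f hf hfu =>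
    (hF w hwX).mp hw f hf (hfu.trans huw)

theorem LocallyExcluding.append_singleton_mem_iff (hL : LocallyExcluding X k L)
    {v w : List G} (hw : w ∈ L) (hwX : ∀ y ∈ w, y ∈ X) {x : G} (hx : x ∈ X)
    (hvw : v <:+ w) (hv : min (k - 1) w.length ≤ v.length) :
    w ++ [x] ∈ L ↔ v ++ [x] ∈ L := by
  have hwxX : ∀ y ∈ w ++ [x], y ∈ X := by simpa [or_imp, forall_and] using ⟨hwX, hx⟩
  have hvwx : v ++ [x] <:+ w ++ [x] := by
    obtain ⟨t, rfl⟩ := hvw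
    exact ⟨t, by simp⟩
  refine ⟨fun hwx => hL.mem_of_infix hvwx.isInfix hwx hwxX, fun hvx => ?_⟩
  obtain ⟨F, -, hFlen, hF⟩ := hL
  refine (hF _ hwxX).mpr fun f hf hfwx => ?_
  rcases List.infix_concat_iff.mp hfwx with hfs | hfw
  · have hflen : f.length ≤ (v ++ [x]).length := by
      have hfwx_len := hfs.length_le
      have hfk := hFlen f hf
      simp only [List.length_append, List.length_singleton] at hfwx_len ⊢
      omega
    exact (hF _ fun y hy => hwxX y (hvwx.subset hy)).mp hvx f hf
      (List.suffix_of_suffix_length_le hfs hvwx hflen).isInfix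
  · exact (hF w hwX).mp hw f hf hfw

end LocallyExcluding

theorem geodesic_append_iff_suffix_general {G : Type*} [Group G] (X : Set G)
    (k : ℕ)
    (hle : LocallyExcluding X k {w : List G | Geodesic X w})
    (w : List G) (hw : Geodesic X w) (x : G) (hx : x ∈ X) :
    Geodesic X (w ++ [x]) ↔ Geodesic X (w.drop (w.length - (k - 1)) ++ [x]) :=
  hle.append_singleton_mem_iff hw hw.1 hx (List.drop_suffix _ w)
    (by rw [List.length_drop]; omega)

/-- Lemma 2.1(ii): if the geodesics of `G` over `X` are `k`-locally excluding, `w` is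
geodesic, `x ∈ X` and `v` is the suffix of `w` of length `k-1` (or all of `w`), then
`wx` is geodesic iff `vx` is geodesic. -/
theorem geodesic_append_iff_suffix {G : Type*} [Group G] (X : Set G)
    (hfin : X.Finite) (hsym : ∀ x ∈ X, x⁻¹ ∈ X) (hgen : Subgroup.closure X = ⊤)
    (k : ℕ) (hk : 0 < k)
    (hle : LocallyExcluding X k {w : List G | Geodesic X w})
    (w : List G) (hw : Geodesic X w) (x : G) (hx : x ∈ X) :
    Geodesic X (w ++ [x]) ↔ Geodesic X (w.drop (w.length - (k - 1)) ++ [x]) :=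
  geodesic_append_iff_suffix_general X k hle w hw x hx
end

section
/- Suppose G is a group with finite symmetric generating set X whose set of geodesic words is k-locally excluding for some k > 0. If w is a geodesic word over X, x ∈ X, and v' is the suffix of w of length 2k-2 (or all of w if l(w) < 2k-2), then l_G(wx) - l(w) = l_G(v'x) - l(v'). -/
/-
Write `δ(v) = l_G(vx) - l(v)`; for geodesic `w` it lies in `{-1, 0, 1}`. Since
`l_G(psx) ≤ l(p) + l_G(sx)`, `δ` can only grow when a word is cut down to a suffix, so
`δ(w) ≤ δ(v')`, and it suffices to find a suffix `s` of `w` with `l(s) ≤ 2k - 2` and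
`δ(s) ≤ δ(w)`. For `δ(w) = 1` take `s` empty. Otherwise `wx` is not geodesic while `w` is, so a
forbidden factor of `wx` has the form `bx` with `b` a suffix of `w` and `l(b) < k`; this settles
`δ(w) = 0`. If `δ(w) = -1` but `l_G(bx) = l(b)`, replace `bx` by a geodesic `c` of the same
length: with `w = w₀b`, the word `w₀c` represents `wx` and is too long, and its forbidden factor
straddles `w₀ | c`, giving a suffix `a` of `w₀` with `l(a) < k` and `δ(ab) = -1`.
-/

namespace List

theorem IsSuffix.suffix_drop_of_length_le {α : Type*} {s w : List α} (h : s <:+ w) {n : ℕ}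
    (hn : s.length ≤ n) : s <:+ w.drop (w.length - n) :=
  suffix_of_suffix_length_le h (drop_suffix _ _) <| by
    have := h.length_le
    simp only [length_drop]
    omega

end List

section WordMetric

variable {G : Type*} [Group G] {X : Set G}

theorem lG_le_length {w : List G} (hw : ∀ a ∈ w, a ∈ X) : lG X w.prod ≤ w.length :=
  Nat.sInf_le ⟨w, hw, rfl, rfl⟩

theorem exists_geodesic_prod_eq {w : List G} (hw : ∀ a ∈ w, a ∈ X) :
    ∃ c, Geodesic X c ∧ c.prod = w.prod := by
  obtain ⟨c, hc, hprod, hlen⟩ := Nat.sInf_mem (⟨w.length, w, hw, rfl, rfl⟩ :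
    {n | ∃ c : List G, (∀ a ∈ c, a ∈ X) ∧ c.prod = w.prod ∧ c.length = n}.Nonempty)
  exact ⟨c, ⟨hc, by rw [hprod]; exact hlen⟩, hprod⟩

theorem not_geodesic_iff {w : List G} (hw : ∀ a ∈ w, a ∈ X) :
    ¬ Geodesic X w ↔ lG X w.prod < w.length := by
  have := lG_le_length hw
  rw [Geodesic, and_iff_right hw]
  omega

theorem lG_append_append_le {p s t : List G} (hp : ∀ a ∈ p, a ∈ X) (hs : ∀ a ∈ s, a ∈ X)
    (ht : ∀ a ∈ t, a ∈ X) : lG X (p ++ s ++ t).prod ≤ p.length + lG X s.prod + t.length := by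
  obtain ⟨c, ⟨hcX, hclen⟩, hc⟩ := exists_geodesic_prod_eq hs
  calc lG X (p ++ s ++ t).prod = lG X (p ++ c ++ t).prod := by simp only [List.prod_append, hc]
    _ ≤ (p ++ c ++ t).length :=
      lG_le_length (List.forall_mem_append.2 ⟨List.forall_mem_append.2 ⟨hp, hcX⟩, ht⟩)
    _ = p.length + lG X s.prod + t.length := by simp only [List.length_append, hclen, hc]

theorem Geodesic.infix {u w : List G} (hw : Geodesic X w) (h : u <:+: w) : Geodesic X u := by
  obtain ⟨p, t, rfl⟩ := h
  obtain ⟨hpu, ht⟩ := List.forall_mem_append.1 hw.1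
  obtain ⟨hp, hu⟩ := List.forall_mem_append.1 hpu
  have hle := lG_append_append_le hp hu ht
  have hlen := hw.2
  simp only [List.length_append] at hlen
  exact ⟨hu, le_antisymm (by omega) (lG_le_length hu)⟩

theorem lG_append_sub_length_le_of_suffix {s t v : List G} (hv : ∀ a ∈ v, a ∈ X)
    (ht : ∀ a ∈ t, a ∈ X) (h : s <:+ v) :
    (lG X (v ++ t).prod : ℤ) - v.length ≤ lG X (s ++ t).prod - s.length := by
  obtain ⟨p, rfl⟩ := h
  obtain ⟨hp, hs⟩ := List.forall_mem_append.1 hv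
  have hle := lG_append_append_le (t := []) hp (List.forall_mem_append.2 ⟨hs, ht⟩) (by simp)
  simp only [List.append_nil, List.length_nil, add_zero] at hle
  simp only [List.append_assoc, List.length_append]
  omega

theorem Geodesic.length_le_lG_append_singleton {w : List G} (hw : Geodesic X w) {x : G}
    (hx : x ∈ X) (hx' : x⁻¹ ∈ X) : w.length ≤ lG X (w ++ [x]).prod + 1 := by
  have hle := lG_append_append_le (p := []) (t := [x⁻¹]) (by simp)
    (List.forall_mem_append.2 ⟨hw.1, List.forall_mem_singleton.2 hx⟩)
    (List.forall_mem_singleton.2 hx')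
  simp only [List.nil_append, List.prod_append, List.prod_singleton, mul_inv_cancel_right,
    List.length_nil, List.length_singleton, zero_add] at hle
  rw [List.prod_append, List.prod_singleton, hw.2]
  exact hle

namespace LocallyExcluding

variable {k : ℕ}

theorem exists_suffix_not_geodesic_append (hle : LocallyExcluding X k {w | Geodesic X w})
    {u v : List G} (hu : Geodesic X u)
    (hv : ∀ a ∈ v, a ∈ X) (huv : ¬ Geodesic X (u ++ v)) :
    ∃ a, a <:+ u ∧ a.length < k ∧ ¬ Geodesic X (a ++ v) := by
  obtain ⟨F, -, hFlen, hF⟩ := hle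
  obtain ⟨f, hfF, hf⟩ : ∃ f ∈ F, f <:+: u ++ v := by
    by_contra! h
    exact huv ((hF _ (List.forall_mem_append.2 ⟨hu.1, hv⟩)).2 h)
  have hfu : ¬ f <:+: u := (hF u hu.1).1 hu f hfF
  suffices ∃ a, a <:+ u ∧ a.length < f.length ∧ f <:+: a ++ v by
    obtain ⟨a, ha, hlen, hfa⟩ := this
    exact ⟨a, ha, hlen.trans_le (hFlen f hfF), fun hg => (hF _ hg.1).1 hg f hfF hfa⟩
  rcases List.infix_append_iff.1 hf with h | h | ⟨a, b, rfl, ha, hb⟩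
  · exact absurd h hfu
  · refine ⟨[], List.nil_suffix, List.length_pos_iff.2 ?_, h⟩
    rintro rfl
    exact hfu List.nil_infix
  · refine ⟨a, ha, ?_, ((List.prefix_append_right_inj a).2 hb).isInfix⟩
    rcases b.eq_nil_or_concat with rfl | ⟨b', y, rfl⟩
    · exact absurd (by simpa using ha.isInfix) hfu
    · simp

theorem exists_short_suffix_lG_append_lt (hle : LocallyExcluding X k {w | Geodesic X w})
    {w : List G} (hw : Geodesic X w) {x : G} (hx : x ∈ X)
    (hwx : lG X (w ++ [x]).prod < w.length) :
    ∃ s, s <:+ w ∧ s.length ≤ 2 * k - 2 ∧ lG X (s ++ [x]).prod < s.length := by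
  have hxX : ∀ a ∈ [x], a ∈ X := List.forall_mem_singleton.2 hx
  obtain ⟨b, hb, hbk, hbx⟩ := hle.exists_suffix_not_geodesic_append hw hxX
    ((not_geodesic_iff (List.forall_mem_append.2 ⟨hw.1, hxX⟩)).2
      (by rw [List.length_append, List.length_singleton]; omega))
  have hbX : ∀ a ∈ b, a ∈ X := fun a ha => hw.1 a (hb.subset ha)
  rw [not_geodesic_iff (List.forall_mem_append.2 ⟨hbX, hxX⟩), List.length_append,
    List.length_singleton, Nat.lt_succ_iff] at hbx
  rcases hbx.lt_or_eq with hlt | heq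
  · exact ⟨b, hb, by omega, hlt⟩
  obtain ⟨c, hc, hcb⟩ := exists_geodesic_prod_eq (List.forall_mem_append.2 ⟨hbX, hxX⟩)
  obtain ⟨w₀, rfl⟩ := hb
  have hw₀ : Geodesic X w₀ := hw.infix List.infix_append_left
  have hw₀c : ¬ Geodesic X (w₀ ++ c) := by
    rw [not_geodesic_iff (List.forall_mem_append.2 ⟨hw₀.1, hc.1⟩)]
    simp only [List.prod_append, List.length_append, hc.2, hcb] at hwx heq ⊢
    rw [← mul_assoc]
    omega
  obtain ⟨a, ha, hak, hac⟩ := hle.exists_suffix_not_geodesic_append hw₀ hc.1 hw₀c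
  have hclen : c.length = b.length := by rw [hc.2, hcb, heq]
  rw [not_geodesic_iff (List.forall_mem_append.2 ⟨fun y hy => hw₀.1 y (ha.subset hy), hc.1⟩),
    List.prod_append, hcb, ← List.prod_append, List.length_append, hclen] at hac
  obtain ⟨w₁, rfl⟩ := ha
  refine ⟨a ++ b, ⟨w₁, (List.append_assoc ..).symm⟩, by rw [List.length_append]; omega, ?_⟩
  rwa [List.append_assoc, List.length_append]

theorem exists_short_suffix_lG_append_sub_le (hle : LocallyExcluding X k {w | Geodesic X w})
    {w : List G} (hw : Geodesic X w) {x : G} (hx : x ∈ X) (hx' : x⁻¹ ∈ X) :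
    ∃ s, s <:+ w ∧ s.length ≤ 2 * k - 2 ∧
      (lG X (s ++ [x]).prod : ℤ) - s.length ≤ lG X (w ++ [x]).prod - w.length := by
  have hxX : ∀ a ∈ [x], a ∈ X := List.forall_mem_singleton.2 hx
  have hwX : ∀ a ∈ w ++ [x], a ∈ X := List.forall_mem_append.2 ⟨hw.1, hxX⟩
  have hlower := hw.length_le_lG_append_singleton hx hx'
  have hupper := lG_le_length hwX
  rw [List.length_append, List.length_singleton] at hupper
  rcases lt_trichotomy (lG X (w ++ [x]).prod) w.length with hlt | heq | hgt
  · obtain ⟨s, hs, hsk, hsx⟩ := hle.exists_short_suffix_lG_append_lt hw hx hlt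
    exact ⟨s, hs, hsk, by omega⟩
  · obtain ⟨a, ha, hak, hax⟩ := hle.exists_suffix_not_geodesic_append hw hxX
      ((not_geodesic_iff hwX).2 (by rw [List.length_append, List.length_singleton]; omega))
    rw [not_geodesic_iff (List.forall_mem_append.2 ⟨fun y hy => hw.1 y (ha.subset hy), hxX⟩),
      List.length_append, List.length_singleton] at hax
    exact ⟨a, ha, by omega, by omega⟩
  · have hx1 := lG_le_length hxX
    refine ⟨[], List.nil_suffix, Nat.zero_le _, ?_⟩
    simp only [List.nil_append, List.length_nil, List.length_singleton] at hx1 ⊢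
    omega

end LocallyExcluding

end WordMetric

theorem lG_append_sub_eq_suffix_general {G : Type*} [Group G] (X : Set G)
    (hsym : ∀ x ∈ X, x⁻¹ ∈ X)
    (k : ℕ)
    (hle : LocallyExcluding X k {w : List G | Geodesic X w})
    (w : List G) (hw : Geodesic X w) (x : G) (hx : x ∈ X) :
    (lG X ((w ++ [x]).prod) : ℤ) - w.length =
      (lG X ((w.drop (w.length - (2 * k - 2)) ++ [x]).prod) : ℤ) -
        (w.drop (w.length - (2 * k - 2))).length := by
  have hxX : ∀ a ∈ [x], a ∈ X := List.forall_mem_singleton.2 hx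
  have hv : w.drop (w.length - (2 * k - 2)) <:+ w := List.drop_suffix _ _
  obtain ⟨s, hs, hsk, hsx⟩ := hle.exists_short_suffix_lG_append_sub_le hw hx (hsym x hx)
  refine le_antisymm (lG_append_sub_length_le_of_suffix hw.1 hxX hv) ?_
  calc _ ≤ (lG X (s ++ [x]).prod : ℤ) - s.length :=
        lG_append_sub_length_le_of_suffix (fun a ha => hw.1 a (hv.subset ha)) hxX
          (hs.suffix_drop_of_length_le hsk)
    _ ≤ _ := hsx

/-- Lemma 2.1(iii): if the geodesics of `G` over `X` are `k`-locally excluding, `w` is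
geodesic, `x ∈ X` and `v'` is the suffix of `w` of length `2k-2` (or all of `w`), then
`l_G(wx) - l(w) = l_G(v'x) - l(v')`. -/
theorem lG_append_sub_eq_suffix {G : Type*} [Group G] (X : Set G)
    (hfin : X.Finite) (hsym : ∀ x ∈ X, x⁻¹ ∈ X) (hgen : Subgroup.closure X = ⊤)
    (k : ℕ) (hk : 0 < k)
    (hle : LocallyExcluding X k {w : List G | Geodesic X w})
    (w : List G) (hw : Geodesic X w) (x : G) (hx : x ∈ X) :
    (lG X ((w ++ [x]).prod) : ℤ) - w.length =
      (lG X ((w.drop (w.length - (2 * k - 2)) ++ [x]).prod) : ℤ) -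
        (w.drop (w.length - (2 * k - 2))).length :=
  lG_append_sub_eq_suffix_general X hsym k hle w hw x hx
end
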